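/- Let H be a Hopf algebra over a field k, I ⊆ H a coideal right ideal with projection π: H → H/I, B := H^{co H/I}, and suppose B ⊆ H is a homogeneous H/I-Galois extension. For n ≥ 0 consider the assignment ψ̃_n: (π(g⁰) ⊗ ⋯ ⊗ π(gⁿ)) ⊗ h ↦ [gⁿ(2) h S(g⁰(1)) ⊗_B g⁰(2) S(g¹(1)) ⊗_B ⋯ ⊗_B g^{n-1}(2) S(gⁿ(1))]_B ∈ [H^{⊗_B (n+1)}]_B. Then: (i) the right hand side depends only on the classes π(g⁰), …, π(gⁿ) and not on the chosen representatives; and (ii) for every p ∈ H, ψ̃_n((π(g⁰) ⊗ ⋯ ⊗ π(gⁿ))·p ⊗ h) = ψ̃_n((π(g⁰) ⊗ ⋯ ⊗ π(gⁿ)) ⊗ (p ▷ h)), where (π(g⁰) ⊗ ⋯ ⊗ π(gⁿ))·p = π(g⁰ p(1)) ⊗ ⋯ ⊗ π(gⁿ p(n+1)) is the diagonal right H-action and p ▷ h = p(2) h S(p(1)). Consequently ψ̃_n induces a well-defined linear map ψ_n: (H/I)^{⊗(n+1)} ⊗_H ad(H) → [H^{⊗_B (n+1)}]_B. -/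

import Mathlib

open TensorProduct

noncomputable section

universe u

variable (k : Type u) [Field k]

/-- Left-nested tensor powers: `Tq k M n` has `n` tensor factors (`Tq k M 0 = k`). -/
def Tq (M : Type u) [AddCommGroup M] [Module k M] : ℕ → ModuleCat k
  | 0 => ModuleCat.of k k
  | n + 1 => ModuleCat.of k ((Tq M n) ⊗[k] M)

variable (H : Type u) [Ring H] [HopfAlgebra k H]

/-- right multiplication by `b` at position `j` (0-indexed) of `Tq k H n`. -/
def qmulR (b : H) : (n : ℕ) → ℕ → ((Tq k H n : Type u) →ₗ[k] Tq k H n)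
  | 0, _ => LinearMap.id
  | n + 1, j =>
    if j = n then LinearMap.lTensor (Tq k H n) (LinearMap.mulRight k b)
    else LinearMap.rTensor H (qmulR b n j)

/-- left multiplication by `b` at position `j` of `Tq k H n`. -/
def qmulL (b : H) : (n : ℕ) → ℕ → ((Tq k H n : Type u) →ₗ[k] Tq k H n)
  | 0, _ => LinearMap.id
  | n + 1, j =>
    if j = n then LinearMap.lTensor (Tq k H n) (LinearMap.mulLeft k b)
    else LinearMap.rTensor H (qmulL b n j)

/-- functorial push-forward along a linear map on all factors. -/
def qpush {M M' : Type u} [AddCommGroup M] [Module k M] [AddCommGroup M'] [Module k M']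
    (f : M →ₗ[k] M') : (n : ℕ) → ((Tq k M n : Type u) →ₗ[k] Tq k M' n)
  | 0 => LinearMap.id
  | n + 1 => TensorProduct.map (qpush f n) f

/-- diagonal right `H`-action on `Tq k M n` induced by an action `act : M ⊗ H → M`. -/
def qdiag {M : Type u} [AddCommGroup M] [Module k M] (act : M ⊗[k] H →ₗ[k] M) :
    (n : ℕ) → ((Tq k M n : Type u) ⊗[k] H →ₗ[k] Tq k M n)
  | 0 => (TensorProduct.lid k k).toLinearMap.comp
      (LinearMap.lTensor k (Coalgebra.counit (R := k)))
  | n + 1 =>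
    (TensorProduct.map (qdiag act n) act).comp
      ((TensorProduct.tensorTensorTensorComm k (Tq k M n) M H H).toLinearMap.comp
        (LinearMap.lTensor ((Tq k M n : Type u) ⊗[k] M) (Coalgebra.comul (R := k))))

end

noncomputable section

universe u

variable (k : Type u) [Field k] (H : Type u) [Ring H] [HopfAlgebra k H]

/-- the left adjoint action `adAct (h ⊗ m) = h₍₂₎ * m * S(h₍₁₎)` as a linear map. -/
def adAct : H ⊗[k] H →ₗ[k] H :=
  (LinearMap.mul' k H).comp
    ((TensorProduct.comm k H H).toLinearMap.comp
      ((LinearMap.lTensor H (LinearMap.mul' k H)).comp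
        ((TensorProduct.assoc k H H H).toLinearMap.comp
          ((LinearMap.rTensor H (LinearMap.rTensor H (HopfAlgebra.antipode (R := k)))).comp
            (LinearMap.rTensor H (Coalgebra.comul (R := k)))))))

variable (I : Submodule k H)

/-- `I` is a coideal right ideal of `H`. -/
def IsCoidealRightIdeal : Prop :=
  (∀ x ∈ I, ∀ h : H, x * h ∈ I) ∧
  (∀ x ∈ I, Coalgebra.counit (R := k) x = (0 : k)) ∧
  (∀ x ∈ I, Coalgebra.comul (R := k) x ∈
    LinearMap.range (TensorProduct.map I.subtype (LinearMap.id (M := H))) ⊔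
      LinearMap.range (TensorProduct.map (LinearMap.id (M := H)) I.subtype))

/-- `b ∈ B = H^{co H/I}`:  `b₍₁₎ ⊗ π(b₍₂₎) = b ⊗ π(1)`. -/
def IsCoinvariant (b : H) : Prop :=
  (LinearMap.lTensor H I.mkQ) (Coalgebra.comul (R := k) b) = b ⊗ₜ[k] I.mkQ 1

/-- the right `H`-action on `H/I` descended from right multiplication. -/
def actC (hIr : ∀ x ∈ I, ∀ h : H, x * h ∈ I) : (H ⧸ I) ⊗[k] H →ₗ[k] H ⧸ I :=
  TensorProduct.lift (I.liftQ ((LinearMap.mul k H).compr₂ I.mkQ)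
    (by
      intro x hx
      rw [LinearMap.mem_ker]
      ext h
      simpa using (Submodule.Quotient.mk_eq_zero I).mpr (hIr x hx h)))

/-- `Δ₂q : u ↦ (u₍₂₎ ⊗ π(u₍₃₎)) ⊗ u₍₁₎`. -/
def deltaTwoQ : H →ₗ[k] (H ⊗[k] (H ⧸ I)) ⊗[k] H :=
  (TensorProduct.comm k H (H ⊗[k] (H ⧸ I))).toLinearMap.comp
    ((LinearMap.lTensor H ((LinearMap.lTensor H I.mkQ).comp (Coalgebra.comul (R := k)))).comp
      (Coalgebra.comul (R := k)))

/-- `Gmap n : h¹ ⊗ ⋯ ⊗ hⁿ ↦ (π(h¹₍₂₎⋯hⁿ₍₂₎) ⊗ ⋯ ⊗ π(hⁿ₍ₙ₊₁₎)) ⊗ (h¹₍₁₎⋯hⁿ₍₁₎)`. -/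
def Gmap (hIr : ∀ x ∈ I, ∀ h : H, x * h ∈ I) :
    (n : ℕ) → ((Tq k H n : Type u) →ₗ[k] (Tq k (H ⧸ I) n : Type u) ⊗[k] H)
  | 0 => (TensorProduct.mk k (Tq k (H ⧸ I) 0 : Type u) H).flip 1
  | n + 1 =>
    (TensorProduct.map
        ((LinearMap.rTensor (H ⧸ I) (qdiag k H (actC k H I hIr) n)).comp
          (TensorProduct.assoc k (Tq k (H ⧸ I) n) H (H ⧸ I)).symm.toLinearMap)
        (LinearMap.mul' k H)).comp
      ((TensorProduct.tensorTensorTensorComm k (Tq k (H ⧸ I) n) H (H ⊗[k] (H ⧸ I))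
          H).toLinearMap.comp
        ((LinearMap.lTensor ((Tq k (H ⧸ I) n : Type u) ⊗[k] H) (deltaTwoQ k H I)).comp
          (LinearMap.rTensor H (Gmap hIr n))))

/-- representative level `φ̃ₙ : h⁰ ⊗ (h¹ ⊗ ⋯ ⊗ hⁿ) ↦
`(π(h¹₍₂₎⋯hⁿ₍₂₎) ⊗ ⋯ ⊗ π(hⁿ₍ₙ₊₁₎) ⊗ π(1)) ⊗ (h⁰h¹₍₁₎⋯hⁿ₍₁₎)`. -/
def phiTilde (hIr : ∀ x ∈ I, ∀ h : H, x * h ∈ I) (n : ℕ) :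
    H ⊗[k] (Tq k H n : Type u) →ₗ[k] (Tq k (H ⧸ I) (n + 1) : Type u) ⊗[k] H :=
  (TensorProduct.map ((TensorProduct.mk k (Tq k (H ⧸ I) n : Type u) (H ⧸ I)).flip (I.mkQ 1))
      (LinearMap.mul' k H)).comp
    ((TensorProduct.leftComm k H (Tq k (H ⧸ I) n) H).toLinearMap.comp
      (LinearMap.lTensor H (Gmap k H I hIr n)))

/-- `Jmap n : g⁰ ⊗ ⋯ ⊗ gⁿ ↦ (S(g⁰₍₁₎) ⊗ (g⁰₍₂₎S(g¹₍₁₎) ⊗ ⋯ ⊗ gⁿ⁻¹₍₂₎S(gⁿ₍₁₎))) ⊗ gⁿ₍₂₎`. -/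
def Jmap : (n : ℕ) →
    ((Tq k H (n + 1) : Type u) →ₗ[k] (H ⊗[k] (Tq k H n : Type u)) ⊗[k] H)
  | 0 =>
    (LinearMap.rTensor H (TensorProduct.comm k (Tq k H 0 : Type u) H).toLinearMap).comp
      (((TensorProduct.assoc k (Tq k H 0 : Type u) H H).symm.toLinearMap).comp
        (LinearMap.lTensor (Tq k H 0 : Type u)
          ((LinearMap.rTensor H (HopfAlgebra.antipode (R := k))).comp
            (Coalgebra.comul (R := k)))))
  | n + 1 =>
    (LinearMap.rTensor H
        (((TensorProduct.assoc k H (Tq k H n) H).toLinearMap).comp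
          ((LinearMap.lTensor (H ⊗[k] (Tq k H n : Type u)) (LinearMap.mul' k H)).comp
            (TensorProduct.assoc k (H ⊗[k] (Tq k H n : Type u)) H H).toLinearMap))).comp
      (((TensorProduct.assoc k ((H ⊗[k] (Tq k H n : Type u)) ⊗[k] H) H H).symm.toLinearMap).comp
        ((LinearMap.lTensor ((H ⊗[k] (Tq k H n : Type u)) ⊗[k] H)
            ((LinearMap.rTensor H (HopfAlgebra.antipode (R := k))).comp
              (Coalgebra.comul (R := k)))).comp
          (LinearMap.rTensor H (Jmap n))))

/-- representative level `ψ̃ₙ : (g⁰ ⊗ ⋯ ⊗ gⁿ) ⊗ h ↦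
`gⁿ₍₂₎hS(g⁰₍₁₎) ⊗ (g⁰₍₂₎S(g¹₍₁₎) ⊗ ⋯ ⊗ gⁿ⁻¹₍₂₎S(gⁿ₍₁₎))`. -/
def psiRep (n : ℕ) :
    (Tq k H (n + 1) : Type u) ⊗[k] H →ₗ[k] H ⊗[k] (Tq k H n : Type u) :=
  (LinearMap.rTensor (Tq k H n) (LinearMap.mul' k H)).comp
    (((TensorProduct.assoc k H H (Tq k H n)).symm.toLinearMap).comp
      ((TensorProduct.comm k (H ⊗[k] (Tq k H n : Type u)) H).toLinearMap.comp
        ((LinearMap.lTensor (H ⊗[k] (Tq k H n : Type u)) (LinearMap.mul' k H)).comp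
          (((TensorProduct.assoc k (H ⊗[k] (Tq k H n : Type u)) H H).toLinearMap).comp
            (LinearMap.rTensor H (Jmap k H n))))))

/-- right multiplication by `b` at slot `j` of `H ⊗ H^{⊗n}` (slot 0 is the first factor). -/
def posR (b : H) (n : ℕ) (j : ℕ) : H ⊗[k] (Tq k H n : Type u) →ₗ[k] H ⊗[k] (Tq k H n : Type u) :=
  if j = 0 then LinearMap.rTensor (Tq k H n) (LinearMap.mulRight k b)
  else LinearMap.lTensor H (qmulR k H b n (j - 1))

/-- left multiplication by `b` at slot `j` of `H ⊗ H^{⊗n}`. -/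
def posL (b : H) (n : ℕ) (j : ℕ) : H ⊗[k] (Tq k H n : Type u) →ₗ[k] H ⊗[k] (Tq k H n : Type u) :=
  if j = 0 then LinearMap.rTensor (Tq k H n) (LinearMap.mulLeft k b)
  else LinearMap.lTensor H (qmulL k H b n (j - 1))

/-- The cyclic `B`-relations defining `C_n(H ∣ B) = [H^{⊗_B (n+1)}]_B` inside `H^{⊗(n+1)}`:
inserting `b ∈ B` between cyclically adjacent slots from either side. -/
def relCyc (n : ℕ) : Submodule k (H ⊗[k] (Tq k H n : Type u)) :=
  Submodule.span k
    {x | ∃ (b : H) (v : H ⊗[k] (Tq k H n : Type u)) (j : Fin (n + 1)),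
      IsCoinvariant k H I b ∧
      x = posR k H b n j v - posL k H b n (((j : ℕ) + 1) % (n + 1)) v}

/-- The `⊗_H`-relations defining `(H/I)^{⊗(n+1)} ⊗_H ad(H)` inside `(H/I)^{⊗(n+1)} ⊗ H`
(written on representatives, using the diagonal right action and the adjoint action). -/
def relAd (n : ℕ) : Submodule k ((Tq k (H ⧸ I) (n + 1) : Type u) ⊗[k] H) :=
  Submodule.span k
    {x | ∃ (v : (Tq k H (n + 1) : Type u)) (p m : H),
      x = (qpush k I.mkQ (n + 1) (qdiag k H (LinearMap.mul' k H) (n + 1) (v ⊗ₜ[k] p))) ⊗ₜ[k] m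
          - (qpush k I.mkQ (n + 1) v) ⊗ₜ[k] (adAct k H (p ⊗ₜ[k] m))}

end

noncomputable section

universe u

variable (k : Type u) [Field k] (H : Type u) [Ring H] [HopfAlgebra k H] (I : Submodule k H)

/-- The subspace of `H ⊗ H` of relations defining `H ⊗_B H`. -/
def relB : Submodule k (H ⊗[k] H) :=
  Submodule.span k
    {x : H ⊗[k] H | ∃ g g' b : H, IsCoinvariant k H I b ∧
      x = (g * b) ⊗ₜ[k] g' - g ⊗ₜ[k] (b * g')}

/-- The representative-level canonical map `H ⊗ H → H ⊗ H/I`, `h ⊗ h' ↦ h h'₍₁₎ ⊗ π(h'₍₂₎)`. -/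
def canTilde : H ⊗[k] H →ₗ[k] H ⊗[k] (H ⧸ I) :=
  (LinearMap.rTensor (H ⧸ I) (LinearMap.mul' k H)).comp
    (((TensorProduct.assoc k H H (H ⧸ I)).symm.toLinearMap).comp
      (LinearMap.lTensor H ((LinearMap.lTensor H I.mkQ).comp (Coalgebra.comul (R := k)))))

/-- `B = H^{co H/I} ⊆ H` is a (homogeneous) `H/I`-Galois extension: the canonical map
descends to a bijection `H ⊗_B H ≃ H ⊗ H/I`. -/
def IsGaloisExtension : Prop :=
  ∃ e : ((H ⊗[k] H) ⧸ relB k H I) ≃ₗ[k] H ⊗[k] (H ⧸ I),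
    ∀ x : H ⊗[k] H, e (Submodule.Quotient.mk x) = canTilde k H I x

end

/-!
Write `Xₙ = (H ⊗ H^{⊗n}) ⊗ H`. `Jmap` builds an element of `Xₙ` out of `g⁰ ⊗ ⋯ ⊗ gⁿ` by
iterating the representative `g ↦ S(g₍₁₎) ⊗ g₍₂₎` of the translation map, and `ψ̃ₙ` is `Jmap`
followed by the wrapping `((a ⊗ t) ⊗ c) ⊗ h ↦ c h a ⊗ t`.

Part (ii) holds already on representatives: `Jmap` turns the diagonal right action into the
twisted action `((a ⊗ t) ⊗ c) · p = (S(p₍₁₎) a ⊗ t) ⊗ c p₍₂₎` (the inner antipodes cancel by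
`p₍₁₎ ⊗ p₍₂₎ S(p₍₃₎) ⊗ p₍₄₎ = p₍₁₎ ⊗ 1 ⊗ p₍₂₎`), and wrapping turns the twisted action into the
adjoint one.

Part (i) is where the Galois condition enters: for `g ∈ I`, `can(S(g₍₁₎) ⊗ g₍₂₎) = 1 ⊗ π(g) = 0`,
so `S(g₍₁₎) ⊗ g₍₂₎` is a relation of `H ⊗_B H`. By right exactness of `⊗`, the kernel of
`π^{⊗(n+1)}` is spanned by tensors with a factor in `I`, hence `Jmap` maps it into the relations
of `H^{⊗_B (n+2)}`, which wrapping sends into the cyclic relations. Part (iii) is then the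
factorisation through the quotients.
-/

universe u

section HopfIdentities

variable {R A : Type*} [CommSemiring R] [Semiring A] [HopfAlgebra R A]

open Coalgebra HopfAlgebra LinearMap

theorem HopfAlgebra.rTensor_mul_antipode_lTensor_comul_comul (a : A) :
    ((mul' R A ∘ₗ (antipode R).lTensor A ∘ₗ comul).rTensor A) (comul a) = 1 ⊗ₜ a := by
  rw [mul_antipode_lTensor_comul, rTensor_comp_apply, rTensor_counit_comul]
  simp

theorem HopfAlgebra.rTensor_mul_antipode_rTensor_comul_comul (a : A) :
    ((mul' R A ∘ₗ (antipode R).rTensor A ∘ₗ comul).rTensor A) (comul a) = 1 ⊗ₜ a := by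
  rw [mul_antipode_rTensor_comul, rTensor_comp_apply, rTensor_counit_comul]
  simp

/-- `a₍₁₎ ⊗ a₍₂₎ S(a₍₃₎) ⊗ a₍₄₎ = a₍₁₎ ⊗ 1 ⊗ a₍₂₎`. -/
theorem HopfAlgebra.collapse_middle (a : A) :
    lTensor A ((mul' R A ∘ₗ (antipode R).lTensor A).rTensor A ∘ₗ
        (TensorProduct.assoc R A A A).symm.toLinearMap)
      (TensorProduct.assoc R A A (A ⊗[R] A) (map comul comul (comul a))) =
      lTensor A (TensorProduct.mk R A A 1) (comul a) := by
  have h : (mul' R A ∘ₗ (antipode R).lTensor A).rTensor A ∘ₗ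
      (TensorProduct.assoc R A A A).symm.toLinearMap ∘ₗ comul.lTensor A ∘ₗ comul =
      TensorProduct.mk R A A 1 := by
    ext b
    simp only [comp_apply, LinearEquiv.coe_coe, coassoc_symm_apply, ← rTensor_comp_apply]
    exact rTensor_mul_antipode_lTensor_comul_comul b
  rw [← lTensor_comp_rTensor, comp_apply, lTensor_tensor]
  simp only [comp_apply, LinearEquiv.coe_coe, LinearEquiv.apply_symm_apply, coassoc_apply]
  rw [← h]
  simp only [lTensor_comp_apply]

end HopfIdentities

theorem LinearMap.exists_comp_eq_of_ker_le {R M N P : Type*} [Ring R] [AddCommGroup M]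
    [Module R M] [AddCommGroup N] [Module R N] [AddCommGroup P] [Module R P] {f : M →ₗ[R] N}
    (hf : Function.Surjective f) {g : M →ₗ[R] P} (h : ker f ≤ ker g) :
    ∃ ψ : N →ₗ[R] P, ψ ∘ₗ f = g := by
  refine ⟨(ker f).liftQ g h ∘ₗ (f.quotKerEquivOfSurjective hf).symm.toLinearMap, ?_⟩
  ext x
  have : (f.quotKerEquivOfSurjective hf).symm (f x) = Submodule.Quotient.mk x := by
    rw [LinearEquiv.symm_apply_eq]
    rfl
  simp [this]

namespace HopfGalois

open Coalgebra HopfAlgebra LinearMap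

variable {k : Type u} [Field k] {H : Type u} [Ring H] [HopfAlgebra k H]

local notation "S" => HopfAlgebra.antipode k (A := H)
local notation "Δ" => Coalgebra.comul (R := k) (A := H)
local notation "μ" => LinearMap.mul' k H

theorem Tq.induction_on {M : Type u} [AddCommGroup M] [Module k M] {n : ℕ}
    {motive : (Tq k M (n + 1) : Type u) → Prop} (x : (Tq k M (n + 1) : Type u)) (zero : motive 0)
    (tmul : ∀ (s : (Tq k M n : Type u)) (m : M), motive (s ⊗ₜ[k] m))
    (add : ∀ x y, motive x → motive y → motive (x + y)) : motive x :=
  TensorProduct.induction_on x zero tmul add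

theorem qpush_surjective {M M' : Type u} [AddCommGroup M] [Module k M] [AddCommGroup M']
    [Module k M'] {f : M →ₗ[k] M'} (hf : Function.Surjective f) :
    ∀ n, Function.Surjective (qpush k f n)
  | 0 => Function.surjective_id
  | n + 1 => TensorProduct.map_surjective (qpush_surjective hf n) hf

theorem qdiag_zero_tmul {M : Type u} [AddCommGroup M] [Module k M] (act : M ⊗[k] H →ₗ[k] M)
    (s : (Tq k M 0 : Type u)) (x : H) :
    qdiag k H act 0 (s ⊗ₜ[k] x) = Coalgebra.counit (R := k) x • s :=
  mul_comm (show k from s) _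

theorem qdiag_succ_tmul {M : Type u} [AddCommGroup M] [Module k M] (act : M ⊗[k] H →ₗ[k] M)
    (n : ℕ) (w : (Tq k M n : Type u)) (m : M) {p : H} {ι : Type*} (𝓡 : Coalgebra.Repr k p ι) :
    qdiag k H act (n + 1) ((w ⊗ₜ[k] m) ⊗ₜ[k] p) =
      ∑ i ∈ 𝓡.index, qdiag k H act n (w ⊗ₜ[k] 𝓡.left i) ⊗ₜ[k] act (m ⊗ₜ[k] 𝓡.right i) := by
  change map (qdiag k H act n) act (tensorTensorTensorComm k _ _ _ _ ((w ⊗ₜ[k] m) ⊗ₜ[k] Δ p)) = _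
  simp [← 𝓡.eq, tmul_sum]

theorem qdiag_one_tmul (s : (Tq k H 0 : Type u)) (g p : H) :
    qdiag k H μ 1 ((s ⊗ₜ[k] g) ⊗ₜ[k] p) = s ⊗ₜ[k] (g * p) := by
  rw [qdiag_succ_tmul μ 0 s g (ℛ k p)]
  simp only [qdiag_zero_tmul, mul'_apply, smul_tmul, ← mul_smul_comm, ← tmul_sum, ← Finset.mul_sum,
    Coalgebra.sum_counit_smul]
  rfl

theorem adAct_tmul (p h : H) {ι : Type*} (𝓡 : Coalgebra.Repr k p ι) :
    adAct k H (p ⊗ₜ[k] h) = ∑ i ∈ 𝓡.index, 𝓡.right i * h * S (𝓡.left i) := by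
  simp [adAct, ← 𝓡.eq, sum_tmul]

variable (k) in
/-- A lift to `H ⊗ H` of the translation map `π(g) ↦ can⁻¹(1 ⊗ π(g))`. -/
noncomputable def translationRep : H →ₗ[k] H ⊗[k] H := (S).rTensor H ∘ₗ Δ

theorem canTilde_translationRep (I : Submodule k H) (g : H) :
    canTilde k H I (translationRep k g) = 1 ⊗ₜ I.mkQ g := by
  have h : canTilde k H I ∘ₗ (S).rTensor H = I.mkQ.lTensor H ∘ₗ (μ ∘ₗ (S).rTensor H).rTensor H ∘ₗ
      (TensorProduct.assoc k H H H).symm.toLinearMap ∘ₗ lTensor H Δ := by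
    ext x y
    suffices ∀ W : H ⊗[k] H,
        (μ).rTensor (H ⧸ I) ((TensorProduct.assoc k H H (H ⧸ I)).symm (S x ⊗ₜ I.mkQ.lTensor H W)) =
          I.mkQ.lTensor H ((μ ∘ₗ (S).rTensor H).rTensor H
            ((TensorProduct.assoc k H H H).symm (x ⊗ₜ W))) from
      this (Δ y)
    intro W
    induction W using TensorProduct.induction_on <;> simp_all [tmul_add]
  rw [translationRep, comp_apply, ← comp_apply (canTilde k H I), h]
  simp only [comp_apply, LinearEquiv.coe_coe, coassoc_symm_apply, ← rTensor_comp_apply]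
  rw [comp_assoc, rTensor_mul_antipode_rTensor_comul_comul, lTensor_tmul]

variable {I : Submodule k H}

theorem translationRep_mem_relB (hGal : IsGaloisExtension k H I) {g : H} (hg : g ∈ I) :
    translationRep k g ∈ relB k H I := by
  obtain ⟨e, he⟩ := hGal
  rw [← Submodule.Quotient.mk_eq_zero, ← e.map_eq_zero_iff, he, canTilde_translationRep,
    Submodule.mkQ_apply, (Submodule.Quotient.mk_eq_zero I).mpr hg, tmul_zero]

variable (k) in
noncomputable def twistPair : (H ⊗[k] H) ⊗[k] (H ⊗[k] H) →ₗ[k] H ⊗[k] H :=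
  map (μ ∘ₗ (S).rTensor H ∘ₗ (TensorProduct.comm k H H).toLinearMap) μ ∘ₗ
    (tensorTensorTensorComm k H H H H).toLinearMap

@[simp]
theorem twistPair_tmul (a c x y : H) :
    twistPair k ((a ⊗ₜ[k] c) ⊗ₜ[k] (x ⊗ₜ[k] y)) = (S x * a) ⊗ₜ[k] (c * y) := rfl

theorem rTensor_antipode_mul (U V : H ⊗[k] H) :
    (S).rTensor H (U * V) = twistPair k ((S).rTensor H U ⊗ₜ[k] V) := by
  induction U using TensorProduct.induction_on with
  | zero => simp
  | add U U' hU hU' => simp [add_mul, hU, hU', add_tmul]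
  | tmul a c =>
    induction V using TensorProduct.induction_on with
    | zero => simp
    | add V V' hV hV' => simp [mul_add, hV, hV', tmul_add]
    | tmul x y => simp [antipode_mul_antidistrib]

theorem translationRep_mul (g p : H) :
    translationRep k (g * p) = twistPair k (translationRep k g ⊗ₜ[k] Δ p) := by
  rw [translationRep, comp_apply, Bialgebra.comul_mul, rTensor_antipode_mul]
  rfl

variable (k) in
noncomputable def twist (n : ℕ) :
    ((H ⊗[k] (Tq k H n : Type u)) ⊗[k] H) ⊗[k] (H ⊗[k] H) →ₗ[k]
      (H ⊗[k] (Tq k H n : Type u)) ⊗[k] H :=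
  map ((μ ∘ₗ (S).rTensor H).rTensor (Tq k H n) ∘ₗ
      (TensorProduct.assoc k H H (Tq k H n)).symm.toLinearMap ∘ₗ
      (TensorProduct.comm k (H ⊗[k] (Tq k H n : Type u)) H).toLinearMap) μ ∘ₗ
    (tensorTensorTensorComm k (H ⊗[k] (Tq k H n : Type u)) H H H).toLinearMap

@[simp]
theorem twist_tmul (n : ℕ) (a : H) (t : (Tq k H n : Type u)) (c x y : H) :
    twist k n (((a ⊗ₜ[k] t) ⊗ₜ[k] c) ⊗ₜ[k] (x ⊗ₜ[k] y)) = ((S x * a) ⊗ₜ[k] t) ⊗ₜ[k] (c * y) := rfl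

variable (k) in
noncomputable def glue (n : ℕ) :
    ((H ⊗[k] (Tq k H n : Type u)) ⊗[k] H) ⊗[k] (H ⊗[k] H) →ₗ[k]
      (H ⊗[k] (Tq k H (n + 1) : Type u)) ⊗[k] H :=
  (((TensorProduct.assoc k H (Tq k H n) H).toLinearMap ∘ₗ
      ((μ).lTensor (H ⊗[k] (Tq k H n : Type u))) ∘ₗ
      (TensorProduct.assoc k (H ⊗[k] (Tq k H n : Type u)) H H).toLinearMap).rTensor H) ∘ₗ
    (TensorProduct.assoc k ((H ⊗[k] (Tq k H n : Type u)) ⊗[k] H) H H).symm.toLinearMap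

@[simp]
theorem glue_tmul (n : ℕ) (a : H) (t : (Tq k H n : Type u)) (c x y : H) :
    glue k n (((a ⊗ₜ[k] t) ⊗ₜ[k] c) ⊗ₜ[k] (x ⊗ₜ[k] y)) = (a ⊗ₜ[k] (t ⊗ₜ[k] (c * x))) ⊗ₜ[k] y := rfl

variable (k) in
noncomputable def wrap (n : ℕ) :
    ((H ⊗[k] (Tq k H n : Type u)) ⊗[k] H) ⊗[k] H →ₗ[k] H ⊗[k] (Tq k H n : Type u) :=
  (μ).rTensor (Tq k H n) ∘ₗ (TensorProduct.assoc k H H (Tq k H n)).symm.toLinearMap ∘ₗ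
    (TensorProduct.comm k (H ⊗[k] (Tq k H n : Type u)) H).toLinearMap ∘ₗ
    (μ).lTensor (H ⊗[k] (Tq k H n : Type u)) ∘ₗ
    (TensorProduct.assoc k (H ⊗[k] (Tq k H n : Type u)) H H).toLinearMap

@[simp]
theorem wrap_tmul (n : ℕ) (a : H) (t : (Tq k H n : Type u)) (c h : H) :
    wrap k n (((a ⊗ₜ[k] t) ⊗ₜ[k] c) ⊗ₜ[k] h) = (c * h * a) ⊗ₜ[k] t := rfl

variable (k) in
noncomputable def seed (s : (Tq k H 0 : Type u)) :
    H ⊗[k] H →ₗ[k] (H ⊗[k] (Tq k H 0 : Type u)) ⊗[k] H :=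
  ((TensorProduct.mk k H (Tq k H 0)).flip s).rTensor H

@[simp]
theorem seed_tmul (s : (Tq k H 0 : Type u)) (a c : H) :
    seed k s (a ⊗ₜ[k] c) = (a ⊗ₜ[k] s) ⊗ₜ[k] c := rfl

theorem Jmap_zero_tmul (s : (Tq k H 0 : Type u)) (g : H) :
    Jmap k H 0 (s ⊗ₜ[k] g) = seed k s (translationRep k g) := by
  suffices ∀ W : H ⊗[k] H, ((TensorProduct.comm k (Tq k H 0 : Type u) H).toLinearMap.rTensor H)
      ((TensorProduct.assoc k (Tq k H 0 : Type u) H H).symm (s ⊗ₜ[k] W)) = seed k s W from this _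
  intro W
  induction W using TensorProduct.induction_on <;> simp_all [tmul_add]

theorem Jmap_succ_tmul (n : ℕ) (z : (Tq k H (n + 1) : Type u)) (g : H) :
    Jmap k H (n + 1) (z ⊗ₜ[k] g) = glue k n (Jmap k H n z ⊗ₜ[k] translationRep k g) := rfl

theorem psiRep_tmul (n : ℕ) (z : (Tq k H (n + 1) : Type u)) (h : H) :
    psiRep k H n (z ⊗ₜ[k] h) = wrap k n (Jmap k H n z ⊗ₜ[k] h) := rfl

/-! ### The adjoint action -/

theorem seed_twistPair (s : (Tq k H 0 : Type u)) (W : (H ⊗[k] H) ⊗[k] (H ⊗[k] H)) :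
    seed k s (twistPair k W) = twist k 0 ((seed k s).rTensor (H ⊗[k] H) W) := by
  suffices seed k s ∘ₗ twistPair k = twist k 0 ∘ₗ (seed k s).rTensor (H ⊗[k] H) from
    congr($this W)
  ext a c x y
  simp

theorem sum_glue_twist_tmul (n : ℕ) (a : H) (t : (Tq k H n : Type u)) (c x y : H) {p : H}
    {ι : Type*} (𝓡 : Coalgebra.Repr k p ι) :
    ∑ i ∈ 𝓡.index, glue k n (twist k n (((a ⊗ₜ[k] t) ⊗ₜ[k] c) ⊗ₜ[k] Δ (𝓡.left i)) ⊗ₜ[k]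
        twistPair k ((x ⊗ₜ[k] y) ⊗ₜ[k] Δ (𝓡.right i))) =
      twist k (n + 1) (glue k n (((a ⊗ₜ[k] t) ⊗ₜ[k] c) ⊗ₜ[k] (x ⊗ₜ[k] y)) ⊗ₜ[k] Δ p) := by
  -- `Φ (u ⊗ (v ⊗ w)) = (S(u) a ⊗ (t ⊗ c v x)) ⊗ y w`
  let Φ : H ⊗[k] (H ⊗[k] H) →ₗ[k] (H ⊗[k] (Tq k H (n + 1) : Type u)) ⊗[k] H :=
    twist k (n + 1) ∘ₗ
      (glue k n ∘ₗ TensorProduct.mk k _ _ ((a ⊗ₜ[k] t) ⊗ₜ[k] c) ∘ₗ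
        (TensorProduct.mk k H H).flip y ∘ₗ LinearMap.mulRight k x).rTensor (H ⊗[k] H) ∘ₗ
      (TensorProduct.leftComm k H H H).toLinearMap
  have h := congr(Φ $(collapse_middle (R := k) p))
  rw [← 𝓡.eq] at h
  simp only [map_sum, lTensor_tmul, map_tmul] at h
  convert h using 1
  · refine Finset.sum_congr rfl fun i _ => ?_
    rw [← (ℛ k (𝓡.left i)).eq, ← (ℛ k (𝓡.right i)).eq]
    simp [Φ, sum_tmul, tmul_sum, mul_assoc]
    rfl
  · rw [← 𝓡.eq, tmul_sum, map_sum]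
    refine Finset.sum_congr rfl fun i _ => ?_
    simp [Φ]

theorem sum_glue_twist (n : ℕ) (J : (H ⊗[k] (Tq k H n : Type u)) ⊗[k] H) (w : H ⊗[k] H) {p : H}
    {ι : Type*} (𝓡 : Coalgebra.Repr k p ι) :
    ∑ i ∈ 𝓡.index, glue k n (twist k n (J ⊗ₜ[k] Δ (𝓡.left i)) ⊗ₜ[k]
        twistPair k (w ⊗ₜ[k] Δ (𝓡.right i))) =
      twist k (n + 1) (glue k n (J ⊗ₜ[k] w) ⊗ₜ[k] Δ p) := by
  induction J using TensorProduct.induction_on with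
  | zero => simp
  | add J J' hJ hJ' => simp [add_tmul, Finset.sum_add_distrib, hJ, hJ']
  | tmul Y c =>
    induction Y using TensorProduct.induction_on with
    | zero => simp
    | add Y Y' hY hY' => simp [add_tmul, Finset.sum_add_distrib, hY, hY']
    | tmul a t =>
      induction w using TensorProduct.induction_on with
      | zero => simp
      | add w w' hw hw' => simp [add_tmul, tmul_add, Finset.sum_add_distrib, hw, hw']
      | tmul x y => exact sum_glue_twist_tmul n a t c x y 𝓡

theorem Jmap_qdiag (n : ℕ) (v : (Tq k H (n + 1) : Type u)) (p : H) :
    Jmap k H n (qdiag k H μ (n + 1) (v ⊗ₜ[k] p)) = twist k n (Jmap k H n v ⊗ₜ[k] Δ p) := by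
  induction n generalizing p with
  | zero =>
    induction v using Tq.induction_on with
    | zero => simp
    | add v v' hv hv' => simp [add_tmul, hv, hv']
    | tmul s g =>
      rw [qdiag_one_tmul, Jmap_zero_tmul, Jmap_zero_tmul, translationRep_mul, seed_twistPair]
      rfl
  | succ n ih =>
    induction v using Tq.induction_on with
    | zero => simp
    | add v v' hv hv' => simp [add_tmul, hv, hv']
    | tmul z g =>
      rw [qdiag_succ_tmul μ (n + 1) z g (ℛ k p), Jmap_succ_tmul, ← sum_glue_twist]
      refine (map_sum _ _ _).trans (Finset.sum_congr rfl fun i _ => ?_)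
      rw [Jmap_succ_tmul, mul'_apply, translationRep_mul, ih]

theorem wrap_twist_tmul (n : ℕ) (J : (H ⊗[k] (Tq k H n : Type u)) ⊗[k] H) (x y h : H) :
    wrap k n (twist k n (J ⊗ₜ[k] (x ⊗ₜ[k] y)) ⊗ₜ[k] h) = wrap k n (J ⊗ₜ[k] (y * h * S x)) := by
  induction J using TensorProduct.induction_on with
  | zero => simp
  | add J J' hJ hJ' => simp [add_tmul, hJ, hJ']
  | tmul Y c =>
    induction Y using TensorProduct.induction_on with
    | zero => simp
    | add Y Y' hY hY' => simp [add_tmul, hY, hY']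
    | tmul a t => simp [mul_assoc]

theorem psiRep_qdiag_tmul (n : ℕ) (v : (Tq k H (n + 1) : Type u)) (p h : H) :
    psiRep k H n (qdiag k H μ (n + 1) (v ⊗ₜ[k] p) ⊗ₜ[k] h) =
      psiRep k H n (v ⊗ₜ[k] adAct k H (p ⊗ₜ[k] h)) := by
  rw [psiRep_tmul, psiRep_tmul, Jmap_qdiag, adAct_tmul p h (ℛ k p), ← (ℛ k p).eq]
  simp [tmul_sum, sum_tmul, wrap_twist_tmul]

/-! ### Independence of the representatives -/

/-- The relations of `H ⊗_B ⋯ ⊗_B H` (`n + 2` factors) inside `(H ⊗ H^{⊗n}) ⊗ H`. -/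
def relBal (I : Submodule k H) (n : ℕ) : Submodule k ((H ⊗[k] (Tq k H n : Type u)) ⊗[k] H) :=
  Submodule.span k
    ({x | ∃ b W, ∃ j < n, IsCoinvariant k H I b ∧
        x = (posR k H b n j).rTensor H W - (posL k H b n (j + 1)).rTensor H W} ∪
      {x | ∃ b W, IsCoinvariant k H I b ∧
        x = (posR k H b n n).rTensor H W - (LinearMap.mulLeft k b).lTensor _ W})

theorem wrap_rTensor_posR (b : H) {n : ℕ} (j : ℕ) (W : (H ⊗[k] (Tq k H n : Type u)) ⊗[k] H)
    (h : H) :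
    wrap k n ((posR k H b n j).rTensor H W ⊗ₜ[k] h) = posR k H b n j (wrap k n (W ⊗ₜ[k] h)) := by
  suffices wrap k n ∘ₗ ((posR k H b n j).rTensor H).rTensor H = posR k H b n j ∘ₗ wrap k n from
    congr($this (W ⊗ₜ[k] h))
  ext a t c h
  cases j <;> simp [posR, mul_assoc]

theorem wrap_rTensor_posL_succ (b : H) {n : ℕ} (j : ℕ) (W : (H ⊗[k] (Tq k H n : Type u)) ⊗[k] H)
    (h : H) : wrap k n ((posL k H b n (j + 1)).rTensor H W ⊗ₜ[k] h) =
      posL k H b n (j + 1) (wrap k n (W ⊗ₜ[k] h)) := by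
  suffices wrap k n ∘ₗ ((posL k H b n (j + 1)).rTensor H).rTensor H =
      posL k H b n (j + 1) ∘ₗ wrap k n from congr($this (W ⊗ₜ[k] h))
  ext a t c h
  simp [posL]

theorem wrap_lTensor_mulLeft (b : H) {n : ℕ} (W : (H ⊗[k] (Tq k H n : Type u)) ⊗[k] H) (h : H) :
    wrap k n ((LinearMap.mulLeft k b).lTensor _ W ⊗ₜ[k] h) =
      posL k H b n 0 (wrap k n (W ⊗ₜ[k] h)) := by
  suffices wrap k n ∘ₗ ((LinearMap.mulLeft k b).lTensor _).rTensor H =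
      posL k H b n 0 ∘ₗ wrap k n from congr($this (W ⊗ₜ[k] h))
  ext a t c h
  simp [posL, mul_assoc]

theorem posR_sub_posL_mem_relCyc {b : H} (hb : IsCoinvariant k H I b) {n j : ℕ} (hj : j ≤ n)
    (V : H ⊗[k] (Tq k H n : Type u)) :
    posR k H b n j V - posL k H b n ((j + 1) % (n + 1)) V ∈ relCyc k H I n :=
  Submodule.subset_span ⟨b, V, ⟨j, Nat.lt_succ_of_le hj⟩, hb, rfl⟩

theorem wrap_mem_relCyc {n : ℕ} {w : (H ⊗[k] (Tq k H n : Type u)) ⊗[k] H} (hw : w ∈ relBal I n)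
    (h : H) : wrap k n (w ⊗ₜ[k] h) ∈ relCyc k H I n := by
  suffices relBal I n ≤ (relCyc k H I n).comap (wrap k n ∘ₗ (TensorProduct.mk k _ H).flip h) from
    this hw
  refine Submodule.span_le.mpr ?_
  rintro _ (⟨b, W, j, hj, hb, rfl⟩ | ⟨b, W, hb, rfl⟩) <;>
    simp only [SetLike.mem_coe, Submodule.mem_comap, map_sub, comp_apply,
      flip_apply, mk_apply]
  · have := posR_sub_posL_mem_relCyc hb hj.le (wrap k n (W ⊗ₜ[k] h))
    rwa [Nat.mod_eq_of_lt (Nat.succ_lt_succ hj), ← wrap_rTensor_posR,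
      ← wrap_rTensor_posL_succ] at this
  · have := posR_sub_posL_mem_relCyc hb le_rfl (wrap k n (W ⊗ₜ[k] h))
    rwa [Nat.mod_self, ← wrap_rTensor_posR, ← wrap_lTensor_mulLeft] at this

theorem glue_rTensor_posR (b : H) {n j : ℕ} (hj : j ≤ n) (W : (H ⊗[k] (Tq k H n : Type u)) ⊗[k] H)
    (u : H ⊗[k] H) :
    glue k n ((posR k H b n j).rTensor H W ⊗ₜ[k] u) =
      (posR k H b (n + 1) j).rTensor H (glue k n (W ⊗ₜ[k] u)) := by
  suffices glue k n ∘ₗ ((posR k H b n j).rTensor H).rTensor (H ⊗[k] H) =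
      (posR k H b (n + 1) j).rTensor H ∘ₗ glue k n from congr($this (W ⊗ₜ[k] u))
  ext a t c x y
  rcases j with _ | m
  · simp [posR]; rfl
  · simp [posR, qmulR, show m ≠ n by omega]; rfl

theorem glue_rTensor_posL (b : H) {n j : ℕ} (hj : j ≤ n) (W : (H ⊗[k] (Tq k H n : Type u)) ⊗[k] H)
    (u : H ⊗[k] H) :
    glue k n ((posL k H b n j).rTensor H W ⊗ₜ[k] u) =
      (posL k H b (n + 1) j).rTensor H (glue k n (W ⊗ₜ[k] u)) := by
  suffices glue k n ∘ₗ ((posL k H b n j).rTensor H).rTensor (H ⊗[k] H) =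
      (posL k H b (n + 1) j).rTensor H ∘ₗ glue k n from congr($this (W ⊗ₜ[k] u))
  ext a t c x y
  rcases j with _ | m
  · simp [posL]; rfl
  · simp [posL, qmulL, show m ≠ n by omega]; rfl

theorem glue_lTensor_mulLeft (b : H) {n : ℕ} (W : (H ⊗[k] (Tq k H n : Type u)) ⊗[k] H)
    (u : H ⊗[k] H) :
    glue k n ((LinearMap.mulLeft k b).lTensor _ W ⊗ₜ[k] u) =
      (posL k H b (n + 1) (n + 1)).rTensor H (glue k n (W ⊗ₜ[k] u)) := by
  suffices glue k n ∘ₗ ((LinearMap.mulLeft k b).lTensor _).rTensor (H ⊗[k] H) =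
      (posL k H b (n + 1) (n + 1)).rTensor H ∘ₗ glue k n from congr($this (W ⊗ₜ[k] u))
  ext a t c x y
  simp [posL, qmulL, mul_assoc]
  rfl

theorem glue_mem_relBal_of_left {n : ℕ} {w : (H ⊗[k] (Tq k H n : Type u)) ⊗[k] H}
    (hw : w ∈ relBal I n) (u : H ⊗[k] H) : glue k n (w ⊗ₜ[k] u) ∈ relBal I (n + 1) := by
  suffices relBal I n ≤ (relBal I (n + 1)).comap (glue k n ∘ₗ (TensorProduct.mk k _ _).flip u) from
    this hw
  refine Submodule.span_le.mpr ?_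
  rintro _ (⟨b, W, j, hj, hb, rfl⟩ | ⟨b, W, hb, rfl⟩) <;>
    simp only [SetLike.mem_coe, Submodule.mem_comap, map_sub, comp_apply, flip_apply, mk_apply]
  · refine Submodule.subset_span
      (Or.inl ⟨b, glue k n (W ⊗ₜ[k] u), j, hj.trans n.lt_succ_self, hb, ?_⟩)
    rw [glue_rTensor_posR b hj.le, glue_rTensor_posL b hj]
  · refine Submodule.subset_span (Or.inl ⟨b, glue k n (W ⊗ₜ[k] u), n, n.lt_succ_self, hb, ?_⟩)
    rw [glue_rTensor_posR b le_rfl, glue_lTensor_mulLeft]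

theorem map_relB_le_relBal {m : ℕ} (F : H ⊗[k] H →ₗ[k] (H ⊗[k] (Tq k H m : Type u)) ⊗[k] H)
    (hR : ∀ b u, F ((LinearMap.mulRight k b).rTensor H u) = (posR k H b m m).rTensor H (F u))
    (hL : ∀ b u,
      F ((LinearMap.mulLeft k b).lTensor H u) = (LinearMap.mulLeft k b).lTensor _ (F u)) :
    (relB k H I).map F ≤ relBal I m := by
  rw [relB, Submodule.map_span, Submodule.span_le]
  rintro _ ⟨_, ⟨g, g', b, hb, rfl⟩, rfl⟩
  refine Submodule.subset_span (Or.inr ⟨b, F (g ⊗ₜ[k] g'), hb, ?_⟩)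
  rw [← hR, ← hL]
  exact map_sub F _ _

theorem seed_mem_relBal (s : (Tq k H 0 : Type u)) {u : H ⊗[k] H} (hu : u ∈ relB k H I) :
    seed k s u ∈ relBal I 0 := by
  refine map_relB_le_relBal (seed k s) (fun b u => ?_) (fun b u => ?_) ⟨u, hu, rfl⟩
  · suffices seed k s ∘ₗ (LinearMap.mulRight k b).rTensor H =
        (posR k H b 0 0).rTensor H ∘ₗ seed k s from congr($this u)
    ext x y
    simp [posR]
  · suffices seed k s ∘ₗ (LinearMap.mulLeft k b).lTensor H =
        (LinearMap.mulLeft k b).lTensor _ ∘ₗ seed k s from congr($this u)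
    ext x y
    simp

theorem glue_mem_relBal_of_right {n : ℕ} (J : (H ⊗[k] (Tq k H n : Type u)) ⊗[k] H) {u : H ⊗[k] H}
    (hu : u ∈ relB k H I) : glue k n (J ⊗ₜ[k] u) ∈ relBal I (n + 1) := by
  refine map_relB_le_relBal (glue k n ∘ₗ TensorProduct.mk k _ _ J) (fun b u => ?_) (fun b u => ?_)
    ⟨u, hu, rfl⟩
  · suffices glue k n ∘ₗ ((LinearMap.mulRight k b).rTensor H).lTensor _ =
        (posR k H b (n + 1) (n + 1)).rTensor H ∘ₗ glue k n from congr($this (J ⊗ₜ[k] u))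
    ext a t c x y
    simp [posR, qmulR, ← mul_assoc]
    rfl
  · suffices glue k n ∘ₗ ((LinearMap.mulLeft k b).lTensor H).lTensor _ =
        (LinearMap.mulLeft k b).lTensor _ ∘ₗ glue k n from congr($this (J ⊗ₜ[k] u))
    ext a t c x y
    rfl

theorem ker_qpush_le_comap_Jmap (hGal : IsGaloisExtension k H I) (n : ℕ) :
    ker (qpush k I.mkQ (n + 1)) ≤ (relBal I n).comap (Jmap k H n) := by
  induction n with
  | zero =>
    change ker (I.mkQ.lTensor _) ≤
      ((relBal I 0).comap (Jmap k H 0) : Submodule k ((Tq k H 0 : Type u) ⊗[k] H))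
    rw [lTensor_mkQ, lTensor, range_map_eq_span_tmul, Submodule.span_le]
    rintro _ ⟨s, g, rfl⟩
    show Jmap k H 0 (s ⊗ₜ[k] (g : H)) ∈ relBal I 0
    rw [Jmap_zero_tmul]
    exact seed_mem_relBal s (translationRep_mem_relB hGal g.2)
  | succ n ih =>
    change ker (map (qpush k I.mkQ (n + 1)) I.mkQ) ≤
      ((relBal I (n + 1)).comap (Jmap k H (n + 1)) :
        Submodule k ((Tq k H (n + 1) : Type u) ⊗[k] H))
    rw [TensorProduct.map_ker (exact_subtype_ker_map _) (qpush_surjective I.mkQ_surjective _)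
      (exact_subtype_mkQ I) I.mkQ_surjective, sup_le_iff, lTensor, rTensor,
      range_map_eq_span_tmul, range_map_eq_span_tmul, Submodule.span_le, Submodule.span_le]
    constructor
    · rintro _ ⟨z, g, rfl⟩
      exact glue_mem_relBal_of_right _ (translationRep_mem_relB hGal g.2)
    · rintro _ ⟨z, g, rfl⟩
      exact glue_mem_relBal_of_left (ih z.2) _

theorem psiRep_mem_relCyc (hGal : IsGaloisExtension k H I) (n : ℕ)
    {x : (Tq k H (n + 1) : Type u) ⊗[k] H} (hx : map (qpush k I.mkQ (n + 1)) LinearMap.id x = 0) :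
    psiRep k H n x ∈ relCyc k H I n := by
  suffices ker ((qpush k I.mkQ (n + 1)).rTensor H) ≤ (relCyc k H I n).comap (psiRep k H n) from
    this hx
  rw [(rTensor_exact H (exact_subtype_ker_map _)
      (qpush_surjective I.mkQ_surjective _)).linearMap_ker_eq, rTensor, range_map_eq_span_tmul,
    Submodule.span_le]
  rintro _ ⟨z, h, rfl⟩
  exact wrap_mem_relCyc (ker_qpush_le_comap_Jmap hGal n z.2) h

theorem comap_relAd_le (hGal : IsGaloisExtension k H I) (n : ℕ) :
    (relAd k H I n).comap (map (qpush k I.mkQ (n + 1)) LinearMap.id) ≤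
      (relCyc k H I n).comap (psiRep k H n) := by
  set P := map (qpush k I.mkQ (n + 1)) (LinearMap.id (M := H))
  let G : Set ((Tq k H (n + 1) : Type u) ⊗[k] H) :=
    {x | ∃ v p m, x = qdiag k H μ (n + 1) (v ⊗ₜ[k] p) ⊗ₜ[k] m - v ⊗ₜ[k] adAct k H (p ⊗ₜ[k] m)}
  have hAd : relAd k H I n ≤ (Submodule.span k G).map P := by
    refine Submodule.span_le.mpr ?_
    rintro _ ⟨v, p, m, rfl⟩
    refine ⟨_, Submodule.subset_span ⟨v, p, m, rfl⟩, ?_⟩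
    rw [map_sub]
    rfl
  refine (Submodule.comap_mono hAd).trans ?_
  rw [Submodule.comap_map_eq, sup_le_iff, Submodule.span_le]
  constructor
  · rintro _ ⟨v, p, m, rfl⟩
    simp [psiRep_qdiag_tmul]
  · exact fun x hx => psiRep_mem_relCyc hGal n hx

end HopfGalois

theorem psiTilde_descends_general
    {k : Type u} [Field k] {H : Type u} [Ring H] [HopfAlgebra k H]
    (I : Submodule k H)
    (hGal : IsGaloisExtension k H I) (n : ℕ) :
    -- (i)  the value depends only on the classes `π(g⁰), …, π(gⁿ)`
    (∀ x : (Tq k H (n + 1) : Type u) ⊗[k] H,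
      (TensorProduct.map (qpush k I.mkQ (n + 1)) (LinearMap.id (M := H))) x = 0 →
      (Submodule.Quotient.mk (p := relCyc k H I n) (psiRep k H n x)) = 0) ∧
    -- (ii)  `ψ̃ₙ((π g)·p ⊗ h) = ψ̃ₙ((π g) ⊗ (p ▷ h))`
    (∀ (v : (Tq k H (n + 1) : Type u)) (p h : H),
      (Submodule.Quotient.mk (p := relCyc k H I n)
        (psiRep k H n ((qdiag k H (LinearMap.mul' k H) (n + 1) (v ⊗ₜ[k] p)) ⊗ₜ[k] h))) =
      (Submodule.Quotient.mk (p := relCyc k H I n)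
        (psiRep k H n (v ⊗ₜ[k] (adAct k H (p ⊗ₜ[k] h)))))) ∧
    -- (iii)  hence `ψ̃ₙ` induces `ψₙ : (H/I)^{⊗(n+1)} ⊗_H ad(H) → [H^{⊗_B(n+1)}]_B`
    (∃ ψ : (((Tq k (H ⧸ I) (n + 1) : Type u) ⊗[k] H) ⧸ relAd k H I n) →ₗ[k]
        ((H ⊗[k] (Tq k H n : Type u)) ⧸ relCyc k H I n),
      ∀ x : (Tq k H (n + 1) : Type u) ⊗[k] H,
        ψ (Submodule.Quotient.mk
            ((TensorProduct.map (qpush k I.mkQ (n + 1)) (LinearMap.id (M := H))) x)) =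
          Submodule.Quotient.mk (psiRep k H n x)) := by
  refine ⟨fun x hx => (Submodule.Quotient.mk_eq_zero _).mpr
    (HopfGalois.psiRep_mem_relCyc hGal n hx), fun v p h => by rw [HopfGalois.psiRep_qdiag_tmul], ?_⟩
  obtain ⟨ψ, hψ⟩ := LinearMap.exists_comp_eq_of_ker_le
    (f := (relAd k H I n).mkQ ∘ₗ map (qpush k I.mkQ (n + 1)) LinearMap.id)
    (g := (relCyc k H I n).mkQ ∘ₗ psiRep k H n)
    ((relAd k H I n).mkQ_surjective.comp
      (LinearMap.rTensor_surjective H (HopfGalois.qpush_surjective I.mkQ_surjective (n + 1))))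
    (by simpa [LinearMap.ker_comp] using HopfGalois.comap_relAd_le hGal n)
  exact ⟨ψ, fun x => congr($hψ x)⟩

theorem psiTilde_descends
    {k : Type u} [Field k] {H : Type u} [Ring H] [HopfAlgebra k H]
    (I : Submodule k H) (hI : IsCoidealRightIdeal k H I)
    (hGal : IsGaloisExtension k H I) (n : ℕ) :
    -- (i)  the value depends only on the classes `π(g⁰), …, π(gⁿ)`
    (∀ x : (Tq k H (n + 1) : Type u) ⊗[k] H,
      (TensorProduct.map (qpush k I.mkQ (n + 1)) (LinearMap.id (M := H))) x = 0 →
      (Submodule.Quotient.mk (p := relCyc k H I n) (psiRep k H n x)) = 0) ∧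
    -- (ii)  `ψ̃ₙ((π g)·p ⊗ h) = ψ̃ₙ((π g) ⊗ (p ▷ h))`
    (∀ (v : (Tq k H (n + 1) : Type u)) (p h : H),
      (Submodule.Quotient.mk (p := relCyc k H I n)
        (psiRep k H n ((qdiag k H (LinearMap.mul' k H) (n + 1) (v ⊗ₜ[k] p)) ⊗ₜ[k] h))) =
      (Submodule.Quotient.mk (p := relCyc k H I n)
        (psiRep k H n (v ⊗ₜ[k] (adAct k H (p ⊗ₜ[k] h)))))) ∧
    -- (iii)  hence `ψ̃ₙ` induces `ψₙ : (H/I)^{⊗(n+1)} ⊗_H ad(H) → [H^{⊗_B(n+1)}]_B`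
    (∃ ψ : (((Tq k (H ⧸ I) (n + 1) : Type u) ⊗[k] H) ⧸ relAd k H I n) →ₗ[k]
        ((H ⊗[k] (Tq k H n : Type u)) ⧸ relCyc k H I n),
      ∀ x : (Tq k H (n + 1) : Type u) ⊗[k] H,
        ψ (Submodule.Quotient.mk
            ((TensorProduct.map (qpush k I.mkQ (n + 1)) (LinearMap.id (M := H))) x)) =
          Submodule.Quotient.mk (psiRep k H n x)) :=
  psiTilde_descends_general I hGal n
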